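/- arXiv:2205.03175 — 2 statements merged into one kernel-verified Lean document; each statement's English description precedes it below -/
import Mathlib

section
/- Let 0 < δ ≤ 1/6, 0 < ε ≤ 1/3, δ(ln(1/δ²))² ≤ ε, and set A = (3√15/20) δ^{3/2} and β = 2√3 (∫_0^1 |ψ'(z) - λ(z)|² dz)^{1/2}, where ψ' - λ equals 0 on (0,δ), -A(1/z + 1/(1-z)) on (δ, 1-ε), and -(A/ε) ln((1-ε)(1-δ)/(εδ)) on (1-ε, 1). Then (9/(2√5)) δ ≤ β ≤ (9/2) δ. -/
/-!
On the three layers `(ψ' - λ)²` is `0`, `A² (1/z + 1/(1-z))²` and the constant `(A L / ε)²`, where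
`L = log ((1-ε)(1-δ)/(εδ))`; the bulk term has the antiderivative
`-1/z + 1/(1-z) + 2 log (z/(1-z))`.
Hence `∫ (ψ' - λ)² = A² T` with `T = 1/δ - 1/(1-δ) + 1/ε - 1/(1-ε) + 2L + L²/ε`, and
`β² = 12 A² T = (81/20) δ² · δT`. The leading term `1/δ` gives `δT ≥ 1`. For `δT ≤ 5` one uses
`0 ≤ L ≤ log (1/δ²) ≤ 1/δ` together with `δ log (1/δ²)² ≤ ε`, which also forces `ε ≥ 4δ`.
-/

open MeasureTheory Real Set

theorem integral_zero_one_eq_of_eqOn_Ioo {f g : ℝ → ℝ} {a b c : ℝ}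
    (ha : 0 ≤ a) (hab : a ≤ b) (hb : b ≤ 1) (h₁ : EqOn f 0 (Ioo 0 a))
    (h₂ : EqOn f g (Ioo a b)) (h₃ : EqOn f (fun _ ↦ c) (Ioo b 1))
    (hg : IntervalIntegrable g volume a b) :
    ∫ z in 0..1, f z = (∫ z in a..b, g z) + (1 - b) * c := by
  have i₁ : IntervalIntegrable f volume 0 a :=
    (intervalIntegrable_congr_uIoo (uIoo_of_le ha ▸ h₁)).2 intervalIntegrable_const
  have i₂ : IntervalIntegrable f volume a b :=
    (intervalIntegrable_congr_uIoo (uIoo_of_le hab ▸ h₂)).2 hg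
  have i₃ : IntervalIntegrable f volume b 1 :=
    (intervalIntegrable_congr_uIoo (uIoo_of_le hb ▸ h₃)).2 intervalIntegrable_const
  rw [← intervalIntegral.integral_add_adjacent_intervals (i₁.trans i₂) i₃,
    ← intervalIntegral.integral_add_adjacent_intervals i₁ i₂,
    intervalIntegral.integral_congr_Ioo_of_le ha h₁,
    intervalIntegral.integral_congr_Ioo_of_le hab h₂,
    intervalIntegral.integral_congr_Ioo_of_le hb h₃]
  simp

theorem continuousOn_inv_add_inv_one_sub_sq {a b : ℝ} (ha : 0 < a) (hb : b < 1) :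
    ContinuousOn (fun z ↦ (1 / z + 1 / (1 - z)) ^ 2) (Icc a b) :=
  ((continuousOn_const.div continuousOn_id fun _ hz ↦ (ha.trans_le hz.1).ne').add
    (continuousOn_const.div (continuousOn_const.sub continuousOn_id)
      fun _ hz ↦ (sub_pos.2 (hz.2.trans_lt hb)).ne')).pow 2

theorem integral_inv_add_inv_one_sub_sq {a b : ℝ} (ha : 0 < a) (hab : a ≤ b) (hb : b < 1) :
    ∫ z in a..b, (1 / z + 1 / (1 - z)) ^ 2 =
      1 / a - 1 / (1 - a) + 1 / (1 - b) - 1 / b + 2 * log ((1 - a) * b / (a * (1 - b))) := by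
  have hderiv : ∀ z ∈ uIcc a b, HasDerivAt (fun y ↦ -y⁻¹ + (1 - y)⁻¹ + 2 * (log y - log (1 - y)))
      ((1 / z + 1 / (1 - z)) ^ 2) z := fun z hz ↦ by
    rw [uIcc_of_le hab] at hz
    have hz0 : 0 < z := ha.trans_le hz.1
    have h1z : 0 < 1 - z := sub_pos.2 (hz.2.trans_lt hb)
    have hsub : HasDerivAt (fun y : ℝ ↦ 1 - y) (-1) z := by
      simpa using (hasDerivAt_id z).const_sub 1
    have hinv₁ : HasDerivAt (fun y : ℝ ↦ (1 - y)⁻¹) (-((1 - z) ^ 2)⁻¹ * -1) z :=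
      (hasDerivAt_inv h1z.ne').comp z hsub
    have hlog₁ : HasDerivAt (fun y : ℝ ↦ log (1 - y)) ((1 - z)⁻¹ * -1) z :=
      (hasDerivAt_log h1z.ne').comp z hsub
    refine (((hasDerivAt_inv hz0.ne').neg.add hinv₁).add
      (((hasDerivAt_log hz0.ne').sub hlog₁).const_mul 2)).congr_deriv ?_
    field_simp
    ring
  have hint : IntervalIntegrable (fun z ↦ (1 / z + 1 / (1 - z)) ^ 2) volume a b :=
    (uIcc_of_le hab ▸ continuousOn_inv_add_inv_one_sub_sq ha hb).intervalIntegrable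
  rw [intervalIntegral.integral_eq_sub_of_hasDerivAt hderiv hint,
    log_div (by nlinarith) (by nlinarith), log_mul (by linarith) (by linarith),
    log_mul (by linarith) (by linarith)]
  ring

theorem two_le_log_one_div_sq {δ : ℝ} (hδ0 : 0 < δ) (hδ : δ ≤ 1 / 6) : 2 ≤ log (1 / δ ^ 2) := by
  have h6 : 6 ≤ 1 / δ := by rw [le_div_iff₀ hδ0]; linarith
  have h1 : 1 ≤ log (1 / δ) := by
    rw [le_log_iff_exp_le (by positivity)]
    linarith [exp_one_lt_d9]
  rw [← one_div_pow, log_pow]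
  push_cast
  linarith

theorem log_one_div_sq_le_one_div {δ : ℝ} (hδ0 : 0 < δ) : log (1 / δ ^ 2) ≤ 1 / δ := by
  set t := 1 / √δ with ht
  have htpos : 0 < t := by positivity
  have hδt : 1 / δ = t ^ 2 := by rw [ht, div_pow, sq_sqrt hδ0.le, one_pow]
  rw [← one_div_pow, hδt, ← pow_mul, log_pow]
  push_cast
  nlinarith [log_le_sub_one_of_pos htpos, sq_nonneg (t - 2)]

theorem log_ratio_nonneg {δ ε : ℝ} (hδ0 : 0 < δ) (hδ : δ ≤ 1 / 2) (hε0 : 0 < ε) (hε : ε ≤ 1 / 2) :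
    0 ≤ log ((1 - ε) * (1 - δ) / (ε * δ)) :=
  log_nonneg <| (le_div_iff₀ (by positivity)).2 <| by nlinarith

theorem log_ratio_le_log_one_div_sq {δ ε : ℝ} (hδ0 : 0 < δ) (hδε : δ ≤ ε) (hε : ε < 1) :
    log ((1 - ε) * (1 - δ) / (ε * δ)) ≤ log (1 / δ ^ 2) := by
  have hε0 : 0 < ε := hδ0.trans_le hδε
  have h1ε : 0 < 1 - ε := by linarith
  have h1δ : 0 < 1 - δ := by linarith
  apply log_le_log (by positivity)
  rw [div_le_div_iff₀ (by positivity) (by positivity)]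
  have hprod : (1 - ε) * (1 - δ) ≤ 1 := by nlinarith
  nlinarith [mul_le_mul_of_nonneg_right hprod (sq_nonneg δ), mul_le_mul_of_nonneg_left hδε hδ0.le]

theorem four_mul_le_of_mul_log_sq_le {δ ε : ℝ} (hδ0 : 0 < δ) (hδ : δ ≤ 1 / 6)
    (hδε : δ * log (1 / δ ^ 2) ^ 2 ≤ ε) : 4 * δ ≤ ε := by
  nlinarith [mul_le_mul_of_nonneg_left
    (pow_le_pow_left₀ zero_le_two (two_le_log_one_div_sq hδ0 hδ) 2) hδ0.le]

noncomputable def normalizedEnergy (δ ε L : ℝ) : ℝ :=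
  1 / δ - 1 / (1 - δ) + 1 / ε - 1 / (1 - ε) + 2 * L + L ^ 2 / ε

theorem one_div_le_normalizedEnergy {δ ε L : ℝ} (hδ : δ ≤ 1 / 6) (hε0 : 0 < ε)
    (hε : ε ≤ 1 / 3) (hL : 0 ≤ L) : 1 / δ ≤ normalizedEnergy δ ε L := by
  have h₁ : 3 ≤ 1 / ε := by rw [le_div_iff₀ hε0]; linarith
  have h₂ : 1 / (1 - δ) ≤ 6 / 5 := by rw [div_le_div_iff₀ (by linarith) (by norm_num)]; linarith
  have h₃ : 1 / (1 - ε) ≤ 3 / 2 := by rw [div_le_div_iff₀ (by linarith) (by norm_num)]; linarith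
  have h₄ : 0 ≤ L ^ 2 / ε := by positivity
  unfold normalizedEnergy
  linarith

theorem normalizedEnergy_le_five_div {δ ε L : ℝ} (hδ0 : 0 < δ) (hδ : δ ≤ 1 / 6) (hε : ε ≤ 1 / 3)
    (hδε : δ * log (1 / δ ^ 2) ^ 2 ≤ ε) (hL0 : 0 ≤ L) (hL : L ≤ log (1 / δ ^ 2)) :
    normalizedEnergy δ ε L ≤ 5 / δ := by
  set M := log (1 / δ ^ 2)
  have hMδ : M ≤ 1 / δ := log_one_div_sq_le_one_div hδ0
  have h4δε : 4 * δ ≤ ε := four_mul_le_of_mul_log_sq_le hδ0 hδ hδε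
  have hε0 : 0 < ε := by linarith
  have h₁ : 1 / ε ≤ 1 / 4 * (1 / δ) := by
    calc 1 / ε ≤ 1 / (4 * δ) := one_div_le_one_div_of_le (by positivity) h4δε
      _ = 1 / 4 * (1 / δ) := by ring
  have h₂ : 0 ≤ 1 / (1 - δ) := by rw [one_div_nonneg]; linarith
  have h₃ : 0 ≤ 1 / (1 - ε) := by rw [one_div_nonneg]; linarith
  have h₄ : L ^ 2 / ε ≤ 1 / δ := by
    rw [div_le_div_iff₀ hε0 hδ0]
    nlinarith [pow_le_pow_left₀ hL0 hL 2]
  rw [normalizedEnergy, show 5 / δ = 5 * (1 / δ) by ring]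
  linarith

theorem integral_sq_piecewise_eq_normalizedEnergy {δ ε A : ℝ} {φ : ℝ → ℝ} (hδ0 : 0 < δ)
    (hε0 : 0 < ε) (hδε : δ ≤ 1 - ε)
    (hφ : ∀ z, φ z = if z ≤ δ then 0
      else if z ≤ 1 - ε then -A * (1 / z + 1 / (1 - z))
      else -(A / ε) * log ((1 - ε) * (1 - δ) / (ε * δ))) :
    ∫ z in (0 : ℝ)..1, |φ z| ^ 2 =
      A ^ 2 * normalizedEnergy δ ε (log ((1 - ε) * (1 - δ) / (ε * δ))) := by
  set L := log ((1 - ε) * (1 - δ) / (ε * δ)) with hL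
  have hbulk : EqOn (fun z ↦ |φ z| ^ 2) (fun z ↦ A ^ 2 * (1 / z + 1 / (1 - z)) ^ 2)
      (Ioo δ (1 - ε)) := fun z hz ↦ by
    simp only [hφ z, if_neg (not_le.2 hz.1), if_pos hz.2.le, sq_abs]
    ring
  have hbottom : EqOn (fun z ↦ |φ z| ^ 2) 0 (Ioo 0 δ) := fun z hz ↦ by
    simp [hφ z, hz.2.le]
  have htop : EqOn (fun z ↦ |φ z| ^ 2) (fun _ ↦ (A / ε * L) ^ 2) (Ioo (1 - ε) 1) := fun z hz ↦ by
    simp only [hφ z, if_neg (not_le.2 (hδε.trans_lt hz.1)), if_neg (not_le.2 hz.1), sq_abs]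
    ring
  have hint : IntervalIntegrable (fun z ↦ A ^ 2 * (1 / z + 1 / (1 - z)) ^ 2) volume δ (1 - ε) :=
    ((continuousOn_inv_add_inv_one_sub_sq hδ0 (by linarith)).intervalIntegrable_of_Icc
      hδε).const_mul _
  rw [integral_zero_one_eq_of_eqOn_Ioo hδ0.le hδε (by linarith) hbottom hbulk htop hint,
    intervalIntegral.integral_const_mul,
    integral_inv_add_inv_one_sub_sq hδ0 hδε (by linarith), sub_sub_cancel,
    show (1 - δ) * (1 - ε) / (δ * ε) = (1 - ε) * (1 - δ) / (ε * δ) by ring, ← hL,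
    normalizedEnergy]
  field_simp

theorem sq_mul_rpow_three_halves {δ : ℝ} (hδ : 0 ≤ δ) :
    (3 * √15 / 20 * δ ^ ((3 : ℝ) / 2)) ^ 2 = 27 / 80 * δ ^ 3 := by
  rw [mul_pow, ← rpow_mul_natCast hδ, div_pow, mul_pow, sq_sqrt (by norm_num)]
  norm_num

theorem two_mul_sqrt_three_mul_sqrt_bounds {δ T : ℝ} (hδ : 0 < δ) (hT₁ : 1 / δ ≤ T)
    (hT₅ : T ≤ 5 / δ) :
    9 / (2 * √5) * δ ≤ 2 * √3 * √(27 / 80 * δ ^ 3 * T) ∧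
      2 * √3 * √(27 / 80 * δ ^ 3 * T) ≤ 9 / 2 * δ := by
  rw [div_le_iff₀' hδ] at hT₁
  rw [le_div_iff₀' hδ] at hT₅
  have hS : 0 ≤ 27 / 80 * δ ^ 3 * T := by
    rw [show 27 / 80 * δ ^ 3 * T = 27 / 80 * δ ^ 2 * (δ * T) by ring]
    positivity
  have hβ : 2 * √3 * √(27 / 80 * δ ^ 3 * T) = √(81 / 20 * δ ^ 2 * (δ * T)) := by
    rw [show 81 / 20 * δ ^ 2 * (δ * T) = 2 ^ 2 * 3 * (27 / 80 * δ ^ 3 * T) by ring,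
      sqrt_mul' (2 ^ 2 * 3) hS, sqrt_mul' (2 ^ 2) zero_le_three, sqrt_sq zero_le_two]
  have h5 : √5 ^ 2 = 5 := sq_sqrt (by norm_num)
  rw [hβ]
  constructor
  · rw [le_sqrt (by positivity) (by positivity), mul_pow, div_pow, mul_pow, h5]
    nlinarith [sq_nonneg δ]
  · rw [sqrt_le_left (by positivity)]
    nlinarith [sq_nonneg δ]

theorem stmt2 (δ ε A β : ℝ) (φ : ℝ → ℝ)
    (hδ0 : 0 < δ) (hδ : δ ≤ 1/6) (hε0 : 0 < ε) (hε : ε ≤ 1/3)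
    (hδε : δ * (Real.log (1/δ^2))^2 ≤ ε)
    (hA : A = (3 * Real.sqrt 15 / 20) * δ ^ ((3:ℝ)/2))
    (hφ : ∀ z, φ z = if z ≤ δ then 0
          else if z ≤ 1 - ε then -A * (1/z + 1/(1-z))
          else -(A/ε) * Real.log ((1-ε)*(1-δ)/(ε*δ)))
    (hβ : β = 2 * Real.sqrt 3 * (∫ z in (0:ℝ)..1, |φ z|^2) ^ ((1:ℝ)/2)) :
    (9 / (2 * Real.sqrt 5)) * δ ≤ β ∧ β ≤ (9/2) * δ := by
  have hL0 : 0 ≤ log ((1 - ε) * (1 - δ) / (ε * δ)) :=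
    log_ratio_nonneg hδ0 (by linarith) hε0 (by linarith)
  have hLM : log ((1 - ε) * (1 - δ) / (ε * δ)) ≤ log (1 / δ ^ 2) :=
    log_ratio_le_log_one_div_sq hδ0 (by linarith [four_mul_le_of_mul_log_sq_le hδ0 hδ hδε])
      (by linarith)
  rw [hβ, integral_sq_piecewise_eq_normalizedEnergy hδ0 hε0 (by linarith) hφ, ← sqrt_eq_rpow, hA,
    sq_mul_rpow_three_halves hδ0.le]
  exact two_mul_sqrt_three_mul_sqrt_bounds hδ0 (one_div_le_normalizedEnergy hδ hε0 hε hL0)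
    (normalizedEnergy_le_five_div hδ0 hδ hε hδε hL0 hLM)
end

section
/- Let α ∈ (1/2, 1), ε ∈ (0, 1/3], δ ∈ (0, (1/3)(1/2)^{1/(2α-1)}], with (2α-1) δ^{2α-1} B(ε,δ,α)² ≤ ε. Set A = (2√3/9)√(2α-1) δ^{α+3/2} and β = √3 (∫_0^1 |ψ'(z) - λ(z)|² dz)^{1/2}, where ψ' - λ equals 0 on (0,δ), -A(z^{-α} + (1-z)^{-1}) on (δ, 1-ε), and -(A/ε)B on (1-ε, 1). Then (√2/3) δ² ≤ β ≤ (4/3) δ². -/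
/-!
Write `u = (2α-1) δ^(2α-1)` and `J = ∫_δ^(1-ε) (z^(-α) + (1-z)⁻¹)²`. The normalisation of `A` gives
`A² = (4/27) δ⁴ u`, so `3 ∫₀¹ |φ|² = (4/9) δ⁴ (u J + u B² / ε)` and it suffices to show
`1/2 ≤ u J + u B² / ε ≤ 4`. The hypothesis on `B` says `u B² / ε ≤ 1`. Comparing the integrand of `J`
with `z^(-2α)` from below and with `2 z^(-2α) + 2 (1-z)^(-2)` from above gives
`1 - X/Y ≤ u J ≤ 2 (1 - X/Y) + 2 u (ε⁻¹ - (1-δ)⁻¹)`, where `X = δ^(2α-1)`, `Y = (1-ε)^(2α-1)`.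
The smallness of `δ` means `(3δ)^(2α-1) ≤ 1/2`, whence `X/Y ≤ 1/2`, and also `X + u ≤ 1/2`;
what is left is `2 u (ε⁻¹ - 1) ≤ 1 + 2X`, which follows from `X + u ≤ 1/2` when `ε ≥ 1/4`, and from
`u B² ≤ ε` together with `B ≥ 3/2` (the logarithm is then at least `1`) when `ε < 1/4`.
-/

open MeasureTheory Real Set

theorem intervalIntegral_eq_of_eqOn_Ioc {a b c d k : ℝ} {h f : ℝ → ℝ}
    (hab : a ≤ b) (hbc : b ≤ c) (hcd : c ≤ d) (h_zero : EqOn h 0 (Ioc a b))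
    (h_mid : EqOn h f (Ioc b c)) (h_const : EqOn h (fun _ ↦ k) (Ioc c d))
    (hf : IntervalIntegrable f volume b c) :
    ∫ x in a..d, h x = (∫ x in b..c, f x) + (d - c) * k := by
  rw [← uIoc_of_le hab] at h_zero
  rw [← uIoc_of_le hbc] at h_mid
  rw [← uIoc_of_le hcd] at h_const
  have h₁ : IntervalIntegrable h volume a b := intervalIntegrable_const.congr h_zero.symm
  have h₂ : IntervalIntegrable h volume b c := hf.congr h_mid.symm
  have h₃ : IntervalIntegrable h volume c d := intervalIntegrable_const.congr h_const.symm
  have congr {u v : ℝ} {g : ℝ → ℝ} (hg : EqOn h g (uIoc u v)) :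
      ∫ x in u..v, h x = ∫ x in u..v, g x :=
    intervalIntegral.integral_congr_ae (Filter.Eventually.of_forall hg)
  rw [← intervalIntegral.integral_add_adjacent_intervals (h₁.trans h₂) h₃,
    ← intervalIntegral.integral_add_adjacent_intervals h₁ h₂, congr h_zero, congr h_mid,
    congr h_const]
  simp [mul_comm]

theorem continuousOn_rpow_neg_Icc {a b α : ℝ} (ha : 0 < a) :
    ContinuousOn (fun z : ℝ ↦ z ^ (-α)) (Icc a b) :=
  continuousOn_id.rpow_const fun _ hz ↦ Or.inl (ha.trans_le hz.1).ne'

theorem continuousOn_inv_one_sub_Icc {a b : ℝ} (hb : b < 1) :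
    ContinuousOn (fun z : ℝ ↦ (1 - z)⁻¹) (Icc a b) :=
  (continuousOn_const.sub continuousOn_id).inv₀ fun _ hz ↦ (sub_pos.2 (hz.2.trans_lt hb)).ne'

theorem integral_inv_one_sub_sq {a b : ℝ} (hab : a ≤ b) (hb : b < 1) :
    ∫ z in a..b, ((1 - z)⁻¹) ^ 2 = (1 - b)⁻¹ - (1 - a)⁻¹ := by
  apply intervalIntegral.integral_eq_sub_of_hasDerivAt (f := fun z ↦ (1 - z)⁻¹)
  · intro z hz
    rw [uIcc_of_le hab] at hz
    simpa [inv_pow] using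
      ((hasDerivAt_id z).const_sub 1).fun_inv (sub_pos.2 (hz.2.trans_lt hb)).ne'
  · exact ((continuousOn_inv_one_sub_Icc hb).pow 2).intervalIntegrable_of_Icc hab

theorem integral_rpow_neg_sq {a b α : ℝ} (ha : 0 < a) (hab : a ≤ b) (hα : α ≠ 1 / 2) :
    ∫ z in a..b, (z ^ (-α)) ^ 2 = (a ^ (1 - 2 * α) - b ^ (1 - 2 * α)) / (2 * α - 1) := by
  have hsq : EqOn (fun z : ℝ ↦ (z ^ (-α)) ^ 2) (fun z ↦ z ^ (-(2 * α))) (uIcc a b) := by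
    intro z hz
    rw [uIcc_of_le hab] at hz
    simp only [← rpow_natCast, ← rpow_mul (ha.trans_le hz.1).le]
    ring_nf
  have hr : -(2 * α) ≠ -1 := fun h ↦ hα (by linarith)
  rw [intervalIntegral.integral_congr hsq,
    integral_rpow (Or.inr ⟨hr, notMem_uIcc_of_lt ha (ha.trans_le hab)⟩),
    div_eq_div_iff (by contrapose! hr; linarith) (by contrapose! hα; linarith)]
  ring_nf

theorem integral_rpow_neg_add_inv_sq_bounds {a b α : ℝ} (ha : 0 < a) (hab : a ≤ b) (hb : b < 1)
    (hα : α ≠ 1 / 2) :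
    (a ^ (1 - 2 * α) - b ^ (1 - 2 * α)) / (2 * α - 1)
        ≤ ∫ z in a..b, (z ^ (-α) + (1 - z)⁻¹) ^ 2 ∧
      ∫ z in a..b, (z ^ (-α) + (1 - z)⁻¹) ^ 2
        ≤ 2 * ((a ^ (1 - 2 * α) - b ^ (1 - 2 * α)) / (2 * α - 1))
          + 2 * ((1 - b)⁻¹ - (1 - a)⁻¹) := by
  have hp := continuousOn_rpow_neg_Icc (b := b) (α := α) ha
  have hq := continuousOn_inv_one_sub_Icc (a := a) hb
  have hp2 : IntervalIntegrable (fun z ↦ (z ^ (-α)) ^ 2) volume a b :=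
    (hp.pow 2).intervalIntegrable_of_Icc hab
  have hq2 : IntervalIntegrable (fun z ↦ ((1 - z)⁻¹) ^ 2) volume a b :=
    (hq.pow 2).intervalIntegrable_of_Icc hab
  have hpq : IntervalIntegrable (fun z ↦ (z ^ (-α) + (1 - z)⁻¹) ^ 2) volume a b :=
    ((hp.add hq).pow 2).intervalIntegrable_of_Icc hab
  rw [← integral_rpow_neg_sq ha hab hα, ← integral_inv_one_sub_sq hab hb,
    ← intervalIntegral.integral_const_mul, ← intervalIntegral.integral_const_mul,
    ← intervalIntegral.integral_add (hp2.const_mul 2) (hq2.const_mul 2)]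
  constructor
  · refine intervalIntegral.integral_mono_on hab hp2 hpq fun z hz ↦ ?_
    have := rpow_nonneg (ha.trans_le hz.1).le (-α)
    have := inv_nonneg.2 (by linarith [hz.2] : 0 ≤ 1 - z)
    nlinarith
  · refine intervalIntegral.integral_mono_on hab hpq ((hp2.const_mul 2).add (hq2.const_mul 2))
      fun z _ ↦ ?_
    nlinarith [sq_nonneg (z ^ (-α) - (1 - z)⁻¹)]

theorem sub_le_rpow_one_sub_sub_div {a b α : ℝ} (ha : 0 < a) (hab : a ≤ b) (hb : b ≤ 1)
    (hα₀ : 0 ≤ α) (hα₁ : α < 1) :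
    b - a ≤ (b ^ (1 - α) - a ^ (1 - α)) / (1 - α) := by
  have hint := integral_rpow (a := a) (b := b) (Or.inl (by linarith : -1 < -α))
  rw [show -α + 1 = 1 - α by ring] at hint
  rw [← hint, ← integral_one]
  refine intervalIntegral.integral_mono_on hab intervalIntegrable_const ?_ fun z hz ↦
    one_le_rpow_of_pos_of_le_one_of_nonpos (ha.trans_le hz.1) (hz.2.trans hb) (by linarith)
  exact (continuousOn_rpow_neg_Icc ha).intervalIntegrable_of_Icc hab

theorem three_mul_rpow_le_half {t δ : ℝ} (ht : 0 < t) (hδ₀ : 0 ≤ δ)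
    (hδ : δ ≤ 1 / 3 * (1 / 2 : ℝ) ^ (1 / t)) : (3 * δ) ^ t ≤ 1 / 2 := by
  rw [← le_rpow_inv_iff_of_pos (by positivity) (by norm_num) ht, ← one_div]
  linarith

theorem le_one_sixth_of_le_rpow {t δ : ℝ} (ht₀ : 0 < t) (ht₁ : t ≤ 1)
    (hδ : δ ≤ 1 / 3 * (1 / 2 : ℝ) ^ (1 / t)) : δ ≤ 1 / 6 := by
  have : (1 / 2 : ℝ) ^ (1 / t) ≤ (1 / 2) ^ (1 : ℝ) :=
    rpow_le_rpow_of_exponent_ge (by norm_num) (by norm_num) (by rw [le_div_iff₀ ht₀]; linarith)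
  rw [rpow_one] at this
  linarith

theorem three_halves_le_rpow_sub_div_add_log {α ε δ : ℝ} (hα₀ : 0 ≤ α) (hα₁ : α < 1)
    (hε₀ : 0 < ε) (hε : ε < 1 / 4) (hδ₀ : 0 < δ) (hδ : δ ≤ 1 / 6) :
    3 / 2 ≤ ((1 - ε) ^ (1 - α) - δ ^ (1 - α)) / (1 - α) + log ((1 - δ) / ε) := by
  have hpow := sub_le_rpow_one_sub_sub_div hδ₀ (by linarith : δ ≤ 1 - ε) (by linarith) hα₀ hα₁
  have hlog : 1 ≤ log ((1 - δ) / ε) := by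
    rw [le_log_iff_exp_le (div_pos (by linarith) hε₀), le_div_iff₀ hε₀]
    nlinarith [exp_one_lt_d9]
  linarith

theorem one_add_le_three_rpow {t : ℝ} (ht : 0 ≤ t) : 1 + t ≤ (3 : ℝ) ^ t := by
  have hlog : 1 ≤ log 3 := by
    rw [le_log_iff_exp_le (by norm_num)]
    exact exp_one_lt_d9.le.trans (by norm_num)
  rw [rpow_def_of_pos (by norm_num)]
  nlinarith [add_one_le_exp (log 3 * t)]

theorem two_mul_inv_sub_one_le {α ε δ B : ℝ} (hα : α ∈ Ioo (1 / 2) 1) (hε₀ : 0 < ε)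
    (hδ₀ : 0 < δ) (hδ : δ ≤ 1 / 6) (h3δ : (3 * δ) ^ (2 * α - 1) ≤ 1 / 2)
    (hB : B = ((1 - ε) ^ (1 - α) - δ ^ (1 - α)) / (1 - α) + log ((1 - δ) / ε))
    (hεB : (2 * α - 1) * δ ^ (2 * α - 1) * B ^ 2 ≤ ε) :
    2 * ((2 * α - 1) * δ ^ (2 * α - 1)) * (ε⁻¹ - 1) ≤ 1 + 2 * δ ^ (2 * α - 1) := by
  obtain ⟨hα₁, hα₂⟩ := hα
  set t := 2 * α - 1
  set X := δ ^ t
  have hX : 0 ≤ X := rpow_nonneg hδ₀.le t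
  have hu : 0 ≤ t * X := mul_nonneg (by linarith) hX
  have huX : t * X ≤ X := mul_le_of_le_one_left hX (by linarith)
  have hsum : (1 + t) * X ≤ 1 / 2 := by
    rw [mul_rpow (by norm_num) hδ₀.le] at h3δ
    nlinarith [one_add_le_three_rpow (t := t) (by linarith)]
  rcases le_or_gt (1 / 4) ε with hε | hε
  · have : t * X * ε⁻¹ ≤ t * X * 4 :=
      mul_le_mul_of_nonneg_left (inv_le_of_inv_le₀ (by norm_num) (by linarith)) hu
    nlinarith
  · have hB32 : 3 / 2 ≤ B :=
      hB ▸ three_halves_le_rpow_sub_div_add_log (by linarith) hα₂ hε₀ hε hδ₀ hδ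
    have : t * X * ε⁻¹ ≤ 4 / 9 := by
      have hB2 : 9 / 4 ≤ B ^ 2 := by nlinarith
      rw [← div_eq_mul_inv, div_le_iff₀ hε₀]
      nlinarith [mul_le_mul_of_nonneg_left hB2 hu]
    nlinarith

theorem mul_integral_rpow_neg_add_inv_sq_bounds {α ε δ : ℝ} (hα : α ∈ Ioo (1 / 2) 1)
    (hε₀ : 0 < ε) (hε : ε ≤ 1 / 3) (hδ₀ : 0 < δ) (hδ : δ ≤ 1 / 6)
    (h3δ : (3 * δ) ^ (2 * α - 1) ≤ 1 / 2) :
    1 / 2 ≤ (2 * α - 1) * δ ^ (2 * α - 1) * ∫ z in δ..(1 - ε), (z ^ (-α) + (1 - z)⁻¹) ^ 2 ∧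
      (2 * α - 1) * δ ^ (2 * α - 1) * ∫ z in δ..(1 - ε), (z ^ (-α) + (1 - z)⁻¹) ^ 2
        ≤ 2 * (1 - δ ^ (2 * α - 1)) + 2 * ((2 * α - 1) * δ ^ (2 * α - 1)) * (ε⁻¹ - 1) := by
  obtain ⟨hα₁, hα₂⟩ := hα
  obtain ⟨hlo, hhi⟩ := integral_rpow_neg_add_inv_sq_bounds hδ₀ (by linarith : δ ≤ 1 - ε)
    (by linarith) (by linarith : α ≠ 1 / 2)
  rw [show 1 - 2 * α = -(2 * α - 1) by ring, rpow_neg hδ₀.le, rpow_neg (by linarith)] at hlo hhi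
  rw [sub_sub_cancel] at hhi
  set t := 2 * α - 1
  set J := ∫ z in δ..(1 - ε), (z ^ (-α) + (1 - z)⁻¹) ^ 2
  set X := δ ^ t
  set Y := (1 - ε) ^ t
  have ht : 0 < t := by linarith
  have hX : 0 < X := rpow_pos_of_pos hδ₀ t
  have hY : 0 < Y := rpow_pos_of_pos (by linarith) t
  have hu : 0 ≤ t * X := by positivity
  have hXY : X / Y ≤ 1 / 2 := by
    rw [← div_rpow hδ₀.le (by linarith)]
    refine le_trans (rpow_le_rpow (div_nonneg hδ₀.le (by linarith)) ?_ ht.le) h3δ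
    rw [div_le_iff₀ (by linarith)]
    nlinarith
  have hXXY : X ≤ X / Y := le_div_self hX.le hY (rpow_le_one (by linarith) (by linarith) ht.le)
  have hδinv : 1 ≤ (1 - δ)⁻¹ := one_le_inv₀ (by linarith) |>.2 (by linarith)
  have hmain : t * X * ((X⁻¹ - Y⁻¹) / t) = 1 - X / Y := by field_simp
  constructor
  · nlinarith [mul_le_mul_of_nonneg_left hlo hu]
  · nlinarith [mul_le_mul_of_nonneg_left hhi hu, mul_le_mul_of_nonneg_left hδinv hu]

theorem integral_sq_abs_eq_of_eq_ite {α ε δ A B : ℝ} {φ : ℝ → ℝ} (hδ₀ : 0 < δ)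
    (hδε : δ ≤ 1 - ε) (hε₀ : 0 < ε)
    (hφ : ∀ z, φ z = if z ≤ δ then 0
          else if z ≤ 1 - ε then -A * (z ^ (-α) + (1 - z)⁻¹)
          else -(A / ε) * B) :
    ∫ z in (0 : ℝ)..1, |φ z| ^ 2
      = A ^ 2 * (∫ z in δ..(1 - ε), (z ^ (-α) + (1 - z)⁻¹) ^ 2) + A ^ 2 * B ^ 2 / ε := by
  have h_zero : EqOn (fun z ↦ |φ z| ^ 2) 0 (Ioc 0 δ) := fun z hz ↦ by
    simp [hφ z, hz.2]
  have h_mid : EqOn (fun z ↦ |φ z| ^ 2) (fun z ↦ A ^ 2 * (z ^ (-α) + (1 - z)⁻¹) ^ 2)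
      (Ioc δ (1 - ε)) := fun z hz ↦ by
    simp [hφ z, hz.2, not_le.2 hz.1, mul_pow]
  have h_const : EqOn (fun z ↦ |φ z| ^ 2) (fun _ ↦ (A / ε * B) ^ 2) (Ioc (1 - ε) 1) :=
    fun z hz ↦ by simp [hφ z, not_le.2 hz.1, not_le.2 (hδε.trans_lt hz.1), mul_pow]
  rw [intervalIntegral_eq_of_eqOn_Ioc hδ₀.le hδε (by linarith) h_zero h_mid h_const
    ((((continuousOn_rpow_neg_Icc hδ₀).add (continuousOn_inv_one_sub_Icc (by linarith))).pow 2
      ).intervalIntegrable_of_Icc hδε |>.const_mul _),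
    intervalIntegral.integral_const_mul]
  field_simp
  ring

theorem stmt12 (α ε δ A β B : ℝ) (φ : ℝ → ℝ)
    (hα : α ∈ Set.Ioo (1/2 : ℝ) 1)
    (hε : ε ∈ Set.Ioc (0:ℝ) (1/3))
    (hδ0 : 0 < δ) (hδ : δ ≤ (1/3) * ((1:ℝ)/2) ^ (1/(2*α - 1)))
    (hB : B = ((1 - ε) ^ (1 - α) - δ ^ (1 - α)) / (1 - α) + Real.log ((1 - δ)/ε))
    (hεB : (2*α - 1) * δ ^ (2*α - 1) * B^2 ≤ ε)
    (hA : A = (2 * Real.sqrt 3 / 9) * Real.sqrt (2*α - 1) * δ ^ (α + 3/2))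
    (hφ : ∀ z, φ z = if z ≤ δ then 0
          else if z ≤ 1 - ε then -A * (z ^ (-α) + (1-z)⁻¹)
          else -(A/ε) * B)
    (hβ : β = Real.sqrt 3 * (∫ z in (0:ℝ)..1, |φ z|^2) ^ ((1:ℝ)/2)) :
    (Real.sqrt 2 / 3) * δ^2 ≤ β ∧ β ≤ (4/3) * δ^2 := by
  obtain ⟨hε₀, hε⟩ := hε
  have ht : 0 < 2 * α - 1 := by linarith [hα.1]
  have h3δ := three_mul_rpow_le_half ht hδ0.le hδ
  have hδ6 := le_one_sixth_of_le_rpow ht (by linarith [hα.2]) hδ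
  obtain ⟨hlo, hhi⟩ := mul_integral_rpow_neg_add_inv_sq_bounds hα hε₀ hε hδ0 hδ6 h3δ
  have hgap := two_mul_inv_sub_one_le hα hε₀ hδ0 hδ6 h3δ hB hεB
  have hA2 : A ^ 2 = 4 / 27 * δ ^ 4 * ((2 * α - 1) * δ ^ (2 * α - 1)) := by
    have : (δ ^ (α + 3 / 2)) ^ 2 = δ ^ 4 * δ ^ (2 * α - 1) := by
      rw [← rpow_natCast, ← rpow_mul hδ0.le, ← rpow_natCast δ 4, ← rpow_add hδ0]
      congr 1
      push_cast
      ring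
    rw [hA, mul_pow, mul_pow, div_pow, mul_pow, sq_sqrt (by norm_num), sq_sqrt ht.le, this]
    ring
  set u := (2 * α - 1) * δ ^ (2 * α - 1)
  set J := ∫ z in δ..(1 - ε), (z ^ (-α) + (1 - z)⁻¹) ^ 2
  have hI : 3 * ∫ z in (0 : ℝ)..1, |φ z| ^ 2 = 4 / 9 * δ ^ 4 * (u * J + u * B ^ 2 / ε) := by
    rw [integral_sq_abs_eq_of_eq_ite hδ0 (by linarith) hε₀ hφ, hA2]
    ring
  have hB₁ : u * B ^ 2 / ε ≤ 1 := div_le_one_of_le₀ hεB hε₀.le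
  have hB₀ : 0 ≤ u * B ^ 2 / ε := by positivity
  rw [hβ, ← sqrt_eq_rpow, ← sqrt_mul zero_le_three, hI]
  constructor
  · rw [le_sqrt (by positivity) (by positivity)]
    nlinarith [sq_sqrt (zero_le_two (α := ℝ))]
  · rw [sqrt_le_left (by positivity)]
    nlinarith
end
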